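/- arXiv:2110.02942 — 2 statements merged into one kernel-verified Lean document; each statement's English description precedes it below -/
import Mathlib

section
/- Let G be a finite group and A = A⁻¹ a symmetric subset of G. Then for every integer k ≥ 3, |A^k|/|A| ≤ (|A³|/|A|)^(k-2), i.e. |A^k| · |A|^(k-3) ≤ |A³|^(k-2). -/
open Pointwise Finset

/-!
Ruzsa's triangle inequality `|B| |V⁻¹ W| ≤ |B V| |B W|`, applied with `B = A`, `V = A²` and
`W = A^k`, gives `|A| |A^(k+2)| ≤ |A³| |A^(k+1)|` once `A` is symmetric, since then `V⁻¹ = A²`.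
Iterating this recurrence from `k = 1` yields the bound.
-/

namespace Finset

variable {G : Type*} [Group G] [DecidableEq G] {A : Finset G}

lemma card_mul_card_pow_add_two_le (hA : A⁻¹ = A) (k : ℕ) :
    #A * #(A ^ (k + 2)) ≤ #(A ^ 3) * #(A ^ (k + 1)) := by
  have h := ruzsa_triangle_inequality_invMul_mul_mul (A ^ 2) A (A ^ k)
  rwa [← inv_pow, hA, ← pow_add, ← pow_succ', ← pow_succ', add_comm] at h

lemma card_pow_add_three_mul_card_pow_le (hA : A⁻¹ = A) (n : ℕ) :
    #(A ^ (n + 3)) * #A ^ n ≤ #(A ^ 3) ^ (n + 1) := by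
  induction n with
  | zero => simp
  | succ n ih =>
    calc #(A ^ (n + 1 + 3)) * #A ^ (n + 1) = #A * #(A ^ (n + 2 + 2)) * #A ^ n := by ring
      _ ≤ #(A ^ 3) * #(A ^ (n + 3)) * #A ^ n :=
        Nat.mul_le_mul_right _ (card_mul_card_pow_add_two_le hA (n + 2))
      _ ≤ #(A ^ 3) * #(A ^ 3) ^ (n + 1) := by rw [mul_assoc]; gcongr
      _ = #(A ^ 3) ^ (n + 1 + 1) := by ring

end Finset

theorem stmt_0_general (G : Type*) [Group G] [DecidableEq G]
    (A : Finset G) (hsym : A⁻¹ = A) (k : ℕ) (hk : 3 ≤ k) :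
    (A ^ k).card * A.card ^ (k - 3) ≤ (A ^ 3).card ^ (k - 2) := by
  obtain ⟨n, rfl⟩ := Nat.exists_eq_add_of_le' hk
  simpa [Nat.add_sub_cancel, show n + 3 - 2 = n + 1 by omega]
    using card_pow_add_three_mul_card_pow_le hsym n

/-- Ruzsa's tripling inequality: for a symmetric subset `A` of a finite group `G`
and `k ≥ 3`, `|A^k| · |A|^(k-3) ≤ |A³|^(k-2)`. -/
theorem stmt_0 (G : Type*) [Group G] [Fintype G] [DecidableEq G]
    (A : Finset G) (hsym : A⁻¹ = A) (k : ℕ) (hk : 3 ≤ k) :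
    (A ^ k).card * A.card ^ (k - 3) ≤ (A ^ 3).card ^ (k - 2) :=
  stmt_0_general G A hsym k hk
end

section
/- Let G be a finite group and A a generating set of G containing the identity. Then either A³ = G or |A³| ≥ 2|A|. -/
/-!
Hamidoune's isoperimetric method. Let `κ` be the least value of `|XA| - |X|` over nonempty `X`
with `XA ≠ G`; an `X` attaining it is a fragment, and a fragment of least size an atom. The
complement of `XA` is a fragment of `A⁻¹` whenever `X` is one of `A`, so `κ(A) = κ(A⁻¹)`,
and after replacing `A` by `A⁻¹` we may assume atoms of `A` are no larger than those of `A⁻¹`.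
Submodularity of `X ↦ |XA|` then shows that two intersecting atoms coincide, so an atom `H ∋ 1`
satisfies `hH = H` for `h ∈ H`. As `A` generates `G`, some `a ∈ A` lies outside `H`, and the
disjoint union `H ∪ Ha ⊆ HA` gives `|H| ≤ κ`. Hence `|A| ≤ |HA| = |H| + κ ≤ 2κ`, and
`|A³| ≥ |A²| + κ ≥ |A| + 2κ ≥ 2|A|`.
-/

open Pointwise

namespace Hamidoune

open Finset

variable {G : Type*} [Group G] [Fintype G] [DecidableEq G] {A X Y H : Finset G}

lemma eq_univ_of_mul_subset (hgen : Subgroup.closure (A : Set G) = ⊤) (hX : X.Nonempty)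
    (hXA : X * A ⊆ X) : X = univ := by
  have hstab : ∀ g, X * {g} = X := by
    intro g
    induction hgen ▸ Subgroup.mem_top g using Subgroup.closure_induction with
    | mem a ha =>
      exact eq_of_subset_of_card_le ((mul_subset_mul_left (singleton_subset_iff.2 ha)).trans hXA)
        (card_mul_singleton X a).ge
    | one => rw [singleton_one, mul_one]
    | mul x y _ _ hx hy => rw [← singleton_mul_singleton, ← mul_assoc, hx, hy]
    | inv x _ hx =>
      conv_lhs => rw [← hx]
      rw [mul_assoc, singleton_mul_singleton, mul_inv_cancel, singleton_one, mul_one]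
  obtain ⟨x, hx⟩ := hX
  refine eq_univ_of_forall fun g => ?_
  have := mul_mem_mul hx (mem_singleton_self (x⁻¹ * g))
  rwa [mul_inv_cancel_left, hstab] at this

noncomputable def connectivity (A : Finset G) : ℕ :=
  sInf {k | ∃ X : Finset G, X.Nonempty ∧ X * A ≠ univ ∧ #(X * A) = #X + k}

def IsFragment (A X : Finset G) : Prop :=
  X.Nonempty ∧ X * A ≠ univ ∧ #(X * A) = #X + connectivity A

noncomputable def atomCard (A : Finset G) : ℕ :=
  sInf {m | ∃ X, IsFragment A X ∧ #X = m}

def IsAtom (A X : Finset G) : Prop :=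
  IsFragment A X ∧ #X = atomCard A

lemma card_add_connectivity_le (hA : (1 : G) ∈ A) (hX : X.Nonempty) (hXA : X * A ≠ univ) :
    #X + connectivity A ≤ #(X * A) := by
  have hle : #X ≤ #(X * A) := card_le_card (subset_mul_left X hA)
  have : connectivity A ≤ #(X * A) - #X := Nat.sInf_le ⟨X, hX, hXA, by omega⟩
  omega

lemma exists_isFragment (hA : (1 : G) ∈ A) (hAu : A ≠ univ) : ∃ X, IsFragment A X := by
  have hpos : 0 < #A := card_pos.2 ⟨1, hA⟩
  exact Nat.sInf_mem
    (s := {k | ∃ X : Finset G, X.Nonempty ∧ X * A ≠ univ ∧ #(X * A) = #X + k})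
    ⟨#A - 1, 1, one_nonempty, by rwa [one_mul], by rw [one_mul, card_one]; omega⟩

lemma exists_isAtom (hA : (1 : G) ∈ A) (hAu : A ≠ univ) : ∃ X, IsAtom A X := by
  obtain ⟨X, hX⟩ := exists_isFragment hA hAu
  exact Nat.sInf_mem (s := {m | ∃ X, IsFragment A X ∧ #X = m}) ⟨#X, X, hX, rfl⟩

lemma IsFragment.ne_univ (hX : IsFragment A X) : A ≠ univ := fun h =>
  hX.2.1 (eq_univ_of_card _ (le_antisymm (card_le_univ _) (h ▸ card_le_card_mul_left hX.1)))

lemma IsFragment.atomCard_le (hX : IsFragment A X) : atomCard A ≤ #X :=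
  Nat.sInf_le ⟨X, hX, rfl⟩

lemma IsFragment.singleton_mul (hX : IsFragment A X) (g : G) : IsFragment A ({g} * X) := by
  obtain ⟨hne, hXA, hcard⟩ := hX
  refine ⟨(singleton_nonempty g).mul hne, fun h => hXA (eq_univ_of_card _ ?_), ?_⟩
  · rw [← card_univ, ← h, mul_assoc, card_singleton_mul]
  · rw [mul_assoc, card_singleton_mul, card_singleton_mul, hcard]

lemma IsAtom.singleton_mul (hX : IsAtom A X) (g : G) : IsAtom A ({g} * X) :=
  ⟨hX.1.singleton_mul g, by rw [card_singleton_mul, hX.2]⟩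

lemma compl_mul_mul_inv_subset_compl (A X : Finset G) : (X * A)ᶜ * A⁻¹ ⊆ Xᶜ := by
  intro g hg
  obtain ⟨z, hz, b, hb, rfl⟩ := mem_mul.1 hg
  rw [mem_compl] at hz ⊢
  exact fun hzb => hz (mem_mul.2 ⟨z * b, hzb, b⁻¹, mem_inv'.1 hb, mul_inv_cancel_right z b⟩)

lemma compl_mul_nonempty_and_card_le (hX : X.Nonempty) (hXA : X * A ≠ univ) :
    (X * A)ᶜ.Nonempty ∧ (X * A)ᶜ * A⁻¹ ≠ univ ∧
      #((X * A)ᶜ * A⁻¹) + #X ≤ #(X * A)ᶜ + #(X * A) := by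
  have hsub := compl_mul_mul_inv_subset_compl A X
  refine ⟨by simpa only [nonempty_iff_ne_empty, ne_eq, compl_eq_empty_iff] using hXA,
    fun h => ?_, ?_⟩
  · obtain ⟨x, hx⟩ := hX
    exact mem_compl.1 (hsub (h ▸ mem_univ x)) hx
  · have := card_le_card hsub
    have := card_compl_add_card (X * A)
    have := card_compl_add_card X
    omega

lemma connectivity_inv_le (hA : (1 : G) ∈ A) (hAu : A ≠ univ) :
    connectivity A⁻¹ ≤ connectivity A := by
  obtain ⟨X, hX, hXA, hcard⟩ := exists_isFragment hA hAu
  obtain ⟨hZ, hZA, hle⟩ := compl_mul_nonempty_and_card_le hX hXA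
  have := card_add_connectivity_le (by simpa using hA) hZ hZA
  omega

lemma connectivity_inv (hA : (1 : G) ∈ A) (hAu : A ≠ univ) :
    connectivity A⁻¹ = connectivity A := by
  refine le_antisymm (connectivity_inv_le hA hAu) ?_
  have := connectivity_inv_le (A := A⁻¹) (by simpa using hA) (by rwa [Ne, ← inv_univ, inv_inj])
  rwa [inv_inv] at this

lemma IsFragment.compl_mul (hA : (1 : G) ∈ A) (hX : IsFragment A X) :
    IsFragment A⁻¹ (X * A)ᶜ := by
  obtain ⟨hZ, hZA, hle⟩ := compl_mul_nonempty_and_card_le hX.1 hX.2.1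
  have := card_add_connectivity_le (by simpa using hA) hZ hZA
  refine ⟨hZ, hZA, ?_⟩
  rw [connectivity_inv hA hX.ne_univ] at this ⊢
  have := hX.2.2
  omega

lemma IsFragment.inter (hA : (1 : G) ∈ A) (hX : IsFragment A X) (hY : IsFragment A Y)
    (hXY : (X ∩ Y).Nonempty) (hU : (X ∪ Y) * A ≠ univ) : IsFragment A (X ∩ Y) := by
  have hI : (X ∩ Y) * A ≠ univ := fun h =>
    hX.2.1 (univ_subset_iff.1 (h ▸ mul_subset_mul_right inter_subset_left))
  refine ⟨hXY, hI, ?_⟩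
  have hIle := card_add_connectivity_le hA hXY hI
  have hUle := card_add_connectivity_le hA (hX.1.mono subset_union_left) hU
  have hIsub := card_le_card (inter_mul_subset (s₁ := X) (s₂ := Y) (t := A))
  have hXYA := card_inter_add_card_union (X * A) (Y * A)
  have hXYcard := card_inter_add_card_union X Y
  rw [union_mul] at hUle
  have := hX.2.2
  have := hY.2.2
  omega

lemma IsFragment.card_compl_mul_add_card_inter_le (hA : (1 : G) ∈ A) (hY : IsFragment A Y)
    (hXY : (X ∩ Y).Nonempty) (hXA : X * A ≠ univ) (hU : (X ∪ Y) * A = univ) :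
    #(X * A)ᶜ + #(X ∩ Y) ≤ #Y := by
  have hI : (X ∩ Y) * A ≠ univ := fun h =>
    hXA (univ_subset_iff.1 (h ▸ mul_subset_mul_right inter_subset_left))
  have hIle := card_add_connectivity_le hA hXY hI
  have hIsub := card_le_card (inter_mul_subset (s₁ := X) (s₂ := Y) (t := A))
  have hXYA := card_inter_add_card_union (X * A) (Y * A)
  rw [← union_mul, hU, card_univ] at hXYA
  have := card_compl_add_card (X * A)
  have := hY.2.2
  omega

lemma IsAtom.eq_of_inter_nonempty (hA : (1 : G) ∈ A) (hα : atomCard A ≤ atomCard A⁻¹)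
    (hX : IsAtom A X) (hY : IsAtom A Y) (hXY : (X ∩ Y).Nonempty) : X = Y := by
  by_cases hU : (X ∪ Y) * A = univ
  · have hle := hY.1.card_compl_mul_add_card_inter_le hA hXY hX.1.2.1 hU
    have hcompl := (hX.1.compl_mul hA).atomCard_le
    have := hXY.card_pos
    have := hY.2
    omega
  · have hI := (hX.1.inter hA hY.1 hXY hU).atomCard_le
    have hXI : X ∩ Y = X := eq_of_subset_of_card_le inter_subset_left (hX.2 ▸ hI)
    exact eq_of_subset_of_card_le (hXI ▸ inter_subset_right) (by rw [hX.2, hY.2])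

lemma one_le_connectivity (hA : (1 : G) ∈ A) (hgen : Subgroup.closure (A : Set G) = ⊤)
    (hAu : A ≠ univ) : 1 ≤ connectivity A := by
  obtain ⟨X, hX, hXA, hcard⟩ := exists_isFragment hA hAu
  by_contra! h0
  have heq : X = X * A :=
    eq_of_subset_of_card_le (subset_mul_left X hA) (by rw [hcard]; omega)
  exact hXA (heq ▸ eq_univ_of_mul_subset hgen hX heq.ge)

lemma IsAtom.singleton_mul_eq_self (hA : (1 : G) ∈ A) (hα : atomCard A ≤ atomCard A⁻¹)
    (hH : IsAtom A H) (h1 : (1 : G) ∈ H) {h : G} (hh : h ∈ H) : {h} * H = H := by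
  have hh' : h ∈ {h} * H := by
    simpa only [mul_one] using mul_mem_mul (mem_singleton_self h) h1
  exact (hH.eq_of_inter_nonempty hA hα (hH.singleton_mul h) ⟨h, mem_inter.2 ⟨hh, hh'⟩⟩).symm

lemma IsAtom.card_le_connectivity (hA : (1 : G) ∈ A)
    (hgen : Subgroup.closure (A : Set G) = ⊤) (hα : atomCard A ≤ atomCard A⁻¹)
    (hH : IsAtom A H) (h1 : (1 : G) ∈ H) : #H ≤ connectivity A := by
  have htrans {h : G} (hh : h ∈ H) : {h} * H = H := hH.singleton_mul_eq_self hA hα h1 hh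
  have hcard := hH.1.2.2
  obtain ⟨a, ha, haH⟩ : ∃ a ∈ A, a ∉ H := by
    by_contra! hAH
    have hHA : H * A ⊆ H := mul_subset_iff.2 fun h hh b hb =>
      htrans hh ▸ mul_mem_mul (mem_singleton_self h) (hAH b hb)
    have := card_le_card hHA
    have := one_le_connectivity hA hgen hH.1.ne_univ
    omega
  have hdisj : Disjoint H (H * {a}) := by
    refine disjoint_left.2 fun y hy hya => haH ?_
    obtain ⟨h, hh, rfl⟩ : ∃ h ∈ H, h * a = y := by simpa [mem_mul] using hya
    rw [← htrans hh] at hy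
    simpa [mem_mul] using hy
  have hunion : #H + #(H * {a}) ≤ #(H * A) := by
    rw [← card_union_of_disjoint hdisj]
    exact card_le_card (union_subset (subset_mul_left H hA)
      (mul_subset_mul_left (singleton_subset_iff.2 ha)))
  rw [card_mul_singleton] at hunion
  omega

lemma card_le_two_mul_connectivity (hA : (1 : G) ∈ A)
    (hgen : Subgroup.closure (A : Set G) = ⊤) (hAu : A ≠ univ)
    (hα : atomCard A ≤ atomCard A⁻¹) : #A ≤ 2 * connectivity A := by
  obtain ⟨X, hX⟩ := exists_isAtom hA hAu
  obtain ⟨x, hx⟩ := hX.1.1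
  have hH : IsAtom A ({x⁻¹} * X) := hX.singleton_mul x⁻¹
  have h1 : (1 : G) ∈ {x⁻¹} * X :=
    inv_mul_cancel x ▸ mul_mem_mul (mem_singleton_self x⁻¹) hx
  have := hH.card_le_connectivity hA hgen hα h1
  have := card_le_card (subset_mul_right A h1)
  have := hH.1.2.2
  omega

lemma two_mul_card_le_card_pow_three (hA : (1 : G) ∈ A)
    (hgen : Subgroup.closure (A : Set G) = ⊤) (h3 : A ^ 3 ≠ univ)
    (hα : atomCard A ≤ atomCard A⁻¹) : 2 * #A ≤ #(A ^ 3) := by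
  have hpow : ∀ n ≤ 3, A ^ n ≠ univ := fun n hn h =>
    h3 (univ_subset_iff.1 (h ▸ pow_subset_pow_right hA hn))
  have hA1 : A ≠ univ := by simpa using hpow 1
  have hA2 : A * A ≠ univ := by simpa [sq] using hpow 2
  have hA3 : A * A * A ≠ univ := by simpa [pow_succ, sq] using h3
  have h12 := card_add_connectivity_le hA ⟨1, hA⟩ hA2
  have h23 := card_add_connectivity_le hA ⟨1, mul_one (1 : G) ▸ mul_mem_mul hA hA⟩ hA3
  have := card_le_two_mul_connectivity hA hgen hA1 hα
  rw [pow_succ, sq]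
  omega

end Hamidoune

open Hamidoune in
/-- Olson's theorem: if `A` generates the finite group `G` and contains the identity,
then either `A³ = G` or `|A³| ≥ 2|A|`. -/
theorem stmt_1 (G : Type*) [Group G] [Fintype G] [DecidableEq G]
    (A : Finset G) (he : (1 : G) ∈ A) (hgen : Subgroup.closure (A : Set G) = ⊤) :
    A ^ 3 = Finset.univ ∨ 2 * A.card ≤ (A ^ 3).card := by
  refine (eq_or_ne (A ^ 3) Finset.univ).imp id fun h3 => ?_
  rcases le_total (atomCard A) (atomCard A⁻¹) with hα | hα
  · exact two_mul_card_le_card_pow_three he hgen h3 hα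
  · have h := two_mul_card_le_card_pow_three (A := A⁻¹) (by simpa using he)
      (by rwa [Finset.coe_inv, Subgroup.closure_inv])
      (by rwa [inv_pow, Ne, ← Finset.inv_univ, inv_inj])
      (by rwa [inv_inv])
    rwa [inv_pow, Finset.card_inv, Finset.card_inv] at h
end
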